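/- arXiv:2603.01242 — 5 statements merged into one kernel-verified Lean document; each statement's English description precedes it below -/
import Mathlib

section
/- There exists a universal constant c > 0 such that: for all integers n, W ≥ 1, every j ∈ [-n,n], and every real λ ≥ 1, the probability under the uniform distribution P_{∞,W,n} on S_W that the diameter of the cycle of j is at least λ is at most 2·exp(−c·λ/W³). -/
open Finset

/-- The integer interval `[-n, n]`, as a type. -/
abbrev Box (n : ℕ) : Type := {x : ℤ // x ∈ Finset.Icc (-(n : ℤ)) (n : ℤ)}

/-- The point `0 ∈ [-n, n]`. -/
def boxZero (n : ℕ) : Box n :=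
  ⟨0, by simp⟩

/-- The maximum of the cycle of `j` under `π`, i.e. `max C_π(j)` where
`C_π(j) = {π^k(j) : k ∈ ℤ}`. -/
noncomputable def maxCycle {n : ℕ} (π : Equiv.Perm (Box n)) (j : Box n) : ℤ :=
  sSup {x : ℤ | ∃ k : ℤ, (((π ^ k) j : Box n) : ℤ) = x}

/-- The minimum of the cycle of `j` under `π`. -/
noncomputable def minCycle {n : ℕ} (π : Equiv.Perm (Box n)) (j : Box n) : ℤ :=
  sInf {x : ℤ | ∃ k : ℤ, (((π ^ k) j : Box n) : ℤ) = x}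

/-- The diameter of the cycle of `j` under `π`. -/
noncomputable def diamCycle {n : ℕ} (π : Equiv.Perm (Box n)) (j : Box n) : ℤ :=
  maxCycle π j - minCycle π j

/-- The Boltzmann–Gibbs weight `exp(-W^{-p} Σ_i |π(i) - i|^p)`. -/
noncomputable def gibbsWeight (p : ℝ) (W n : ℕ) (π : Equiv.Perm (Box n)) : ℝ :=
  Real.exp (-(W : ℝ) ^ (-p) * ∑ i : Box n, |((π i : ℤ) : ℝ) - ((i : ℤ) : ℝ)| ^ p)

open scoped Classical in
/-- The probability of the event `E` under the Gibbs measure `P_{p,W,n}`. -/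
noncomputable def gibbsProb (p : ℝ) (W n : ℕ) (E : Set (Equiv.Perm (Box n))) : ℝ :=
  (∑ π : Equiv.Perm (Box n), if π ∈ E then gibbsWeight p W n π else 0) /
    ∑ π : Equiv.Perm (Box n), gibbsWeight p W n π

/-- The probability of a single permutation under the Gibbs measure `P_{p,W,n}`. -/
noncomputable def gibbsP (p : ℝ) (W n : ℕ) (π : Equiv.Perm (Box n)) : ℝ :=
  gibbsWeight p W n π / ∑ σ : Equiv.Perm (Box n), gibbsWeight p W n σ

/-- The set `S_W` of permutations displacing each point by at most `W`. -/
def SW (n W : ℕ) : Set (Equiv.Perm (Box n)) :=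
  {π | ∀ i : Box n, |(π i : ℤ) - (i : ℤ)| ≤ (W : ℤ)}

open scoped Classical in
/-- The probability of the event `E` under the uniform measure `P_{∞,W,n}` on `S_W`. -/
noncomputable def unifProb (W n : ℕ) (E : Set (Equiv.Perm (Box n))) : ℝ :=
  ((Finset.univ.filter fun π : Equiv.Perm (Box n) => π ∈ SW n W ∧ π ∈ E).card : ℝ) /
    ((Finset.univ.filter fun π : Equiv.Perm (Box n) => π ∈ SW n W).card : ℝ)

/-- `Period(π, j)`: the least positive `m` with `π^m(j) = j`. -/
noncomputable def permPeriod {n : ℕ} (π : Equiv.Perm (Box n)) (j : Box n) : ℕ :=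
  sInf {m : ℕ | 0 < m ∧ (π ^ m) j = j}

/-- `i_first(π)` for the threshold `t`. -/
noncomputable def iFirst {n : ℕ} (t : ℝ) (π : Equiv.Perm (Box n)) : ℕ :=
  sInf {j : ℕ | ((((π ^ j) (boxZero n) : Box n) : ℤ) : ℝ) ≤ t ∧
    t < ((((π ^ (j + 1)) (boxZero n) : Box n) : ℤ) : ℝ)}

/-- `i_last(π)` for the threshold `t`. -/
noncomputable def iLast {n : ℕ} (t : ℝ) (π : Equiv.Perm (Box n)) : ℕ :=
  sSup {j : ℕ | j < permPeriod π (boxZero n) ∧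
    ((((π ^ (j + 1)) (boxZero n) : Box n) : ℤ) : ℝ) ≤ t ∧
    t < ((((π ^ j) (boxZero n) : Box n) : ℤ) : ℝ)}

/-- The uncrossing map `Φ_t(π) = π ∘ (π^{i_first+1}(0)  π^{i_last+1}(0))`. -/
noncomputable def Phi {n : ℕ} (t : ℝ) (π : Equiv.Perm (Box n)) : Equiv.Perm (Box n) :=
  π * Equiv.swap ((π ^ (iFirst t π + 1)) (boxZero n)) ((π ^ (iLast t π + 1)) (boxZero n))


/-!
Fix a level `t ≥ j` below the top of the cycle of `j`. Following the cycle forwards from `j`, let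
`x` be the last point `≤ t` before it first exceeds `t`; following it backwards, let `y` be the
first point `> t`. Composing `π` with the transposition `(x y)` splices the arc from `π x` to `y`
out of the cycle: the new cycle of `j` stays `≤ t` but still contains `x ∈ (t - W, t]`, and the
displacement bound `W` survives the surgery. As `π` is recovered from `π * (x y)` and
`(x, y) ∈ (t - W, t] × (t, t + W]`, this gives `#{max > t} ≤ W² · #{max ∈ (t - W, t]}`, hence
`#{max > t} ≤ W² / (W² + 1) · #{max > t - W}`, and iterating from `t = j` a geometric tail for
`max > j + m W`. The reflection `x ↦ -x` turns this into the same bound for the minimum, and a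
diameter `≥ λ` forces one of the two with `m ≈ λ / (2W)`; finally
`(W² / (W² + 1)) ^ m ≤ exp (-m / (2W²))`.
-/

open Equiv

namespace Equiv.Perm

variable {α : Type*} (π : Perm α) {U : Set α} {j : α}

theorem exists_forall_pow_apply_mem_and_pow_succ_apply_not_mem (hj : j ∈ U)
    (h : ∃ m : ℕ, (π ^ m) j ∉ U) :
    ∃ a : ℕ, (∀ i ≤ a, (π ^ i) j ∈ U) ∧ (π ^ (a + 1)) j ∉ U := by
  classical
  have h' : ∃ m : ℕ, (π ^ (m + 1)) j ∉ U := by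
    obtain ⟨_ | m, hm⟩ := h
    · exact absurd hj hm
    · exact ⟨m, hm⟩
  refine ⟨Nat.find h', fun i hi => ?_, Nat.find_spec h'⟩
  rcases i with _ | i
  · exact hj
  · exact not_not.1 (Nat.find_min h' (by omega))

variable [DecidableEq α] {a b : ℕ}

theorem mul_swap_pow_apply_of_le (ha : ∀ i ≤ a, (π ^ i) j ∈ U) (ha' : (π ^ (a + 1)) j ∉ U)
    {y : α} (hy : y ∉ U) : ∀ i ≤ a, ((π * swap ((π ^ a) j) y) ^ i) j = (π ^ i) j := by
  intro i hi
  induction i with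
  | zero => rfl
  | succ i ih =>
    have hx : (π ^ i) j ≠ (π ^ a) j := fun h => by
      have := ha (i + 1) hi
      rw [pow_succ', mul_apply, h, ← mul_apply, ← pow_succ'] at this
      exact ha' this
    have hy' : (π ^ i) j ≠ y := ne_of_mem_of_not_mem (ha i (by omega)) hy
    rw [pow_succ', mul_apply, ih (by omega), mul_apply, swap_apply_of_ne_of_ne hx hy',
      ← mul_apply, ← pow_succ']

theorem mul_swap_pow_apply_mem (ha : ∀ i ≤ a, (π ^ i) j ∈ U) (hb : ∀ i ≤ b, (π⁻¹ ^ i) j ∈ U)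
    (hb' : (π⁻¹ ^ (b + 1)) j ∉ U) (k : ℕ) :
    ((π * swap ((π ^ a) j) ((π⁻¹ ^ (b + 1)) j)) ^ k) j ∈ U := by
  set x := (π ^ a) j
  set y := (π⁻¹ ^ (b + 1)) j
  have hπy : π y = (π⁻¹ ^ b) j := by
    simp only [y, pow_succ', mul_apply, coe_inv, apply_symm_apply]
  let V : Set α := (fun i => (π ^ i) j) '' Set.Iic a ∪ (fun i => (π⁻¹ ^ i) j) '' Set.Iic b
  have hVU : V ⊆ U := by
    rintro _ (⟨i, hi, rfl⟩ | ⟨i, hi, rfl⟩)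
    exacts [ha i hi, hb i hi]
  have hjV : j ∈ V := Or.inl ⟨0, Nat.zero_le a, rfl⟩
  suffices hV : Set.MapsTo (π * swap x y) V V from hVU (hV.perm_pow k hjV)
  intro u hu
  by_cases hux : u = x
  · rw [hux, mul_apply, swap_apply_left, hπy]
    exact Or.inr ⟨b, Set.mem_Iic.2 le_rfl, rfl⟩
  have huy : u ≠ y := ne_of_mem_of_not_mem (hVU hu) hb'
  rw [mul_apply, swap_apply_of_ne_of_ne hux huy]
  rcases hu with ⟨i, hi, rfl⟩ | ⟨_ | i, hi, rfl⟩
  · have hia : i < a := lt_of_le_of_ne hi (by rintro rfl; exact hux rfl)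
    exact Or.inl ⟨i + 1, Set.mem_Iic.2 hia, by simp only [pow_succ', mul_apply]⟩
  · have ha0 : 0 < a := Nat.pos_of_ne_zero (by rintro rfl; exact hux rfl)
    exact Or.inl ⟨1, Set.mem_Iic.2 ha0, by simp⟩
  · exact Or.inr ⟨i, Set.mem_Iic.2 (by simp at hi; omega), by
      simp only [pow_succ', mul_apply, coe_inv, apply_symm_apply]⟩

theorem exists_mul_swap_pow_apply_mem (hj : j ∈ U) (hfwd : ∃ m : ℕ, (π ^ m) j ∉ U)
    (hbwd : ∃ m : ℕ, (π⁻¹ ^ m) j ∉ U) :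
    ∃ x y, x ∈ U ∧ π x ∉ U ∧ y ∉ U ∧ π y ∈ U ∧
      (∀ k : ℕ, ((π * swap x y) ^ k) j ∈ U) ∧ ∃ k : ℕ, ((π * swap x y) ^ k) j = x := by
  obtain ⟨a, ha, ha'⟩ := π.exists_forall_pow_apply_mem_and_pow_succ_apply_not_mem hj hfwd
  obtain ⟨b, hb, hb'⟩ := π⁻¹.exists_forall_pow_apply_mem_and_pow_succ_apply_not_mem hj hbwd
  refine ⟨(π ^ a) j, (π⁻¹ ^ (b + 1)) j, ha a le_rfl, ?_, hb', ?_,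
    π.mul_swap_pow_apply_mem ha hb hb', a, π.mul_swap_pow_apply_of_le ha ha' hb' a le_rfl⟩
  · rwa [← mul_apply, ← pow_succ']
  · simpa only [pow_succ', mul_apply, coe_inv, apply_symm_apply] using hb b le_rfl

end Equiv.Perm

section CycleExtremes

variable {n : ℕ} (π : Perm (Box n)) (j : Box n)

theorem cycle_coords_eq_range :
    {x : ℤ | ∃ k : ℤ, (((π ^ k) j : Box n) : ℤ) = x} =
      Set.range fun k : ℕ => (((π ^ k) j : Box n) : ℤ) := by
  ext x
  constructor
  · rintro ⟨k, rfl⟩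
    obtain ⟨m, hm⟩ := (show π.SameCycle j ((π ^ k) j) from ⟨k, rfl⟩).exists_nat_pow_eq
    exact ⟨m, congrArg Subtype.val hm⟩
  · rintro ⟨m, rfl⟩
    exact ⟨m, by rw [zpow_natCast]⟩

theorem finite_range_pow_apply : (Set.range fun k : ℕ => (((π ^ k) j : Box n) : ℤ)).Finite :=
  (Set.finite_range (Subtype.val : Box n → ℤ)).subset (Set.range_comp_subset_range _ _)

theorem maxCycle_le_iff {t : ℤ} : maxCycle π j ≤ t ↔ ∀ k : ℕ, (((π ^ k) j : Box n) : ℤ) ≤ t := by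
  rw [maxCycle, cycle_coords_eq_range]
  exact ciSup_le_iff (finite_range_pow_apply π j).bddAbove

theorem le_minCycle_iff {t : ℤ} : t ≤ minCycle π j ↔ ∀ k : ℕ, t ≤ (((π ^ k) j : Box n) : ℤ) := by
  rw [minCycle, cycle_coords_eq_range]
  exact le_ciInf_iff (finite_range_pow_apply π j).bddBelow

theorem lt_maxCycle_iff {t : ℤ} : t < maxCycle π j ↔ ∃ k : ℕ, t < (((π ^ k) j : Box n) : ℤ) := by
  simpa using (maxCycle_le_iff π j).not

theorem le_maxCycle (k : ℕ) : (((π ^ k) j : Box n) : ℤ) ≤ maxCycle π j :=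
  (maxCycle_le_iff π j).1 le_rfl k

theorem maxCycle_inv : maxCycle π⁻¹ j = maxCycle π j := by
  simp only [maxCycle, inv_zpow']
  congr 1
  ext x
  exact ⟨fun ⟨k, hk⟩ => ⟨-k, hk⟩, fun ⟨k, hk⟩ => ⟨-k, by rwa [neg_neg]⟩⟩

def negBox (n : ℕ) : Perm (Box n) :=
  subtypeEquiv (Equiv.neg ℤ) fun x => by simp [neg_le, and_comm]

@[simp]
theorem coe_negBox (x : Box n) : ((negBox n x : Box n) : ℤ) = -x := rfl

theorem conj_negBox_apply (x : Box n) :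
    MulAut.conj (negBox n) π (negBox n x) = negBox n (π x) := by
  simp [Perm.mul_apply]

theorem conj_negBox_pow_apply (k : ℕ) (x : Box n) :
    (MulAut.conj (negBox n) π ^ k) (negBox n x) = negBox n ((π ^ k) x) := by
  rw [← map_pow, conj_negBox_apply]

theorem maxCycle_conj_negBox :
    maxCycle (MulAut.conj (negBox n) π) (negBox n j) = -minCycle π j :=
  eq_of_forall_ge_iff fun t => by
    simp only [maxCycle_le_iff, conj_negBox_pow_apply, coe_negBox, neg_le, le_minCycle_iff]

theorem conj_negBox_mem_SW_iff {W : ℕ} : MulAut.conj (negBox n) π ∈ SW n W ↔ π ∈ SW n W := by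
  have key : ∀ i, |((MulAut.conj (negBox n) π (negBox n i) : Box n) : ℤ) - (negBox n i : ℤ)| =
      |((π i : Box n) : ℤ) - i| := fun i => by
    rw [conj_negBox_apply, coe_negBox, coe_negBox, ← abs_neg]
    ring_nf
  refine ⟨fun h i => key i ▸ h (negBox n i), fun h i => ?_⟩
  obtain ⟨i, rfl⟩ := (negBox n).surjective i
  exact (key i).symm ▸ h i

end CycleExtremes

section Uncrossing

variable {n W : ℕ} {π : Perm (Box n)}

theorem mul_swap_mem_SW (hπ : π ∈ SW n W) {x y : Box n} (hx : |((π y : Box n) : ℤ) - x| ≤ W)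
    (hy : |((π x : Box n) : ℤ) - y| ≤ W) : π * swap x y ∈ SW n W := by
  intro i
  rcases eq_or_ne i x with rfl | hix
  · simpa [Perm.mul_apply] using hx
  rcases eq_or_ne i y with rfl | hiy
  · simpa [Perm.mul_apply] using hy
  simpa [Perm.mul_apply, swap_apply_of_ne_of_ne hix hiy] using hπ i

theorem exists_mul_swap_maxCycle_mem_Ioc (hπ : π ∈ SW n W) {j : Box n} {t : ℤ}
    (hjt : (j : ℤ) ≤ t) (ht : t < maxCycle π j) :
    ∃ x y : Box n, (x : ℤ) ∈ Set.Ioc (t - W) t ∧ (y : ℤ) ∈ Set.Ioc t (t + W) ∧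
      π * swap x y ∈ SW n W ∧ maxCycle (π * swap x y) j ∈ Set.Ioc (t - W) t := by
  have hfwd : ∃ m : ℕ, (π ^ m) j ∉ {z : Box n | (z : ℤ) ≤ t} := by
    obtain ⟨m, hm⟩ := (lt_maxCycle_iff π j).1 ht
    exact ⟨m, hm.not_ge⟩
  have hbwd : ∃ m : ℕ, (π⁻¹ ^ m) j ∉ {z : Box n | (z : ℤ) ≤ t} := by
    obtain ⟨m, hm⟩ := (lt_maxCycle_iff π⁻¹ j).1 ((maxCycle_inv π j).symm ▸ ht)
    exact ⟨m, hm.not_ge⟩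
  obtain ⟨x, y, hx, hπx, hy, hπy, hσ, k, hk⟩ := π.exists_mul_swap_pow_apply_mem hjt hfwd hbwd
  simp only [Set.mem_ofPred_eq, not_le] at hx hπx hy hπy hσ
  have dx := abs_le.1 (hπ x)
  have dy := abs_le.1 (hπ y)
  have hxW : t - W < x := by omega
  refine ⟨x, y, ⟨hxW, hx⟩, ⟨hy, by omega⟩,
    mul_swap_mem_SW hπ (abs_le.2 ⟨by omega, by omega⟩) (abs_le.2 ⟨by omega, by omega⟩),
    hxW.trans_le ?_, (maxCycle_le_iff _ _).2 hσ⟩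
  simpa only [hk] using le_maxCycle (π * swap x y) j k

end Uncrossing

section Counting

open scoped Classical

variable {n W : ℕ}

theorem card_coe_mem_Ioc_le (a b : ℤ) : #{x : Box n | (x : ℤ) ∈ Set.Ioc a b} ≤ (b - a).toNat := by
  rw [← Int.card_Ioc]
  exact card_le_card_of_injOn Subtype.val (fun x hx => by simpa using hx)
    Subtype.val_injective.injOn

theorem card_lt_maxCycle_le (j : Box n) {t : ℤ} (hjt : (j : ℤ) ≤ t) :
    #{π : Perm (Box n) | π ∈ SW n W ∧ t < maxCycle π j} ≤
      W ^ 2 * #{π : Perm (Box n) | π ∈ SW n W ∧ maxCycle π j ∈ Set.Ioc (t - W) t} := by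
  set X : Finset (Box n) := {x | (x : ℤ) ∈ Set.Ioc (t - W) t}
  set Y : Finset (Box n) := {y | (y : ℤ) ∈ Set.Ioc t (t + W)}
  set D : Finset (Perm (Box n)) := {π | π ∈ SW n W ∧ maxCycle π j ∈ Set.Ioc (t - W) t}
  have hsub : ({π | π ∈ SW n W ∧ t < maxCycle π j} : Finset (Perm (Box n))) ⊆
      (X ×ˢ Y ×ˢ D).image fun p => p.2.2 * swap p.1 p.2.1 := by
    intro π hπ
    simp only [mem_filter, mem_univ, true_and] at hπ
    obtain ⟨x, y, hx, hy, hσ, hmax⟩ := exists_mul_swap_maxCycle_mem_Ioc hπ.1 hjt hπ.2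
    refine mem_image.2 ⟨(x, y, π * swap x y), ?_, mul_swap_mul_self x y π⟩
    simp only [X, Y, D, mem_product, mem_filter, mem_univ, true_and]
    exact ⟨hx, hy, hσ, hmax⟩
  have hX : #X ≤ W := (card_coe_mem_Ioc_le _ _).trans_eq (by simp)
  have hY : #Y ≤ W := (card_coe_mem_Ioc_le _ _).trans_eq (by simp)
  calc _ ≤ #((X ×ˢ Y ×ˢ D).image fun p => p.2.2 * swap p.1 p.2.1) := card_le_card hsub
    _ ≤ #X * (#Y * #D) := card_image_le.trans_eq (by rw [card_product, card_product])
    _ ≤ W * (W * #D) := by gcongr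
    _ = W ^ 2 * #D := by ring

theorem card_lt_maxCycle_mul_le (j : Box n) {t : ℤ} (hjt : (j : ℤ) ≤ t) :
    (W ^ 2 + 1) * #{π : Perm (Box n) | π ∈ SW n W ∧ t < maxCycle π j} ≤
      W ^ 2 * #{π : Perm (Box n) | π ∈ SW n W ∧ t - W < maxCycle π j} := by
  set A : Finset (Perm (Box n)) := {π | π ∈ SW n W ∧ t < maxCycle π j}
  set D : Finset (Perm (Box n)) := {π | π ∈ SW n W ∧ maxCycle π j ∈ Set.Ioc (t - W) t}
  set B : Finset (Perm (Box n)) := {π | π ∈ SW n W ∧ t - W < maxCycle π j}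
  have hDA : #D + #A ≤ #B := by
    rw [← card_union_of_disjoint (disjoint_filter.2 fun π _ hD hA => hA.2.not_ge hD.2.2)]
    refine card_le_card fun π hπ => ?_
    simp only [B, mem_union, mem_filter, mem_univ, true_and, Set.mem_Ioc] at hπ ⊢
    rcases hπ with ⟨hSW, hlt, -⟩ | ⟨hSW, hlt⟩
    exacts [⟨hSW, hlt⟩, ⟨hSW, by omega⟩]
  calc (W ^ 2 + 1) * #A = W ^ 2 * #A + #A := by ring
    _ ≤ W ^ 2 * #A + W ^ 2 * #D := by gcongr; exact card_lt_maxCycle_le j hjt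
    _ = W ^ 2 * (#D + #A) := by ring
    _ ≤ W ^ 2 * #B := by gcongr

theorem card_lt_maxCycle_pow_mul_le (j : Box n) (m : ℕ) :
    (W ^ 2 + 1) ^ m * #{π : Perm (Box n) | π ∈ SW n W ∧ (j : ℤ) + m * W < maxCycle π j} ≤
      (W ^ 2) ^ m * #{π : Perm (Box n) | π ∈ SW n W} := by
  induction m with
  | zero =>
    simp only [CharP.cast_eq_zero, zero_mul, add_zero, pow_zero, one_mul]
    exact card_le_card fun π hπ => by
      simp only [mem_filter, mem_univ, true_and] at hπ ⊢
      exact hπ.1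
  | succ m ih =>
    have step := card_lt_maxCycle_mul_le (W := W) j (t := j + (m + 1 : ℕ) * W)
      (le_add_of_nonneg_right (by positivity))
    rw [show (j : ℤ) + (m + 1 : ℕ) * W - W = j + m * W by push_cast; ring] at step
    rw [pow_succ (W ^ 2 + 1) m, pow_succ' (W ^ 2) m, mul_assoc, mul_assoc]
    calc _ ≤ (W ^ 2 + 1) ^ m * (W ^ 2 * _) := Nat.mul_le_mul_left _ step
      _ = W ^ 2 * ((W ^ 2 + 1) ^ m * _) := mul_left_comm _ _ _
      _ ≤ _ := Nat.mul_le_mul_left _ ih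

end Counting

section Probability

open scoped Classical

variable {n W : ℕ}

theorem unifProb_mono {E F : Set (Perm (Box n))} (h : E ⊆ F) :
    unifProb W n E ≤ unifProb W n F := by
  unfold unifProb
  gcongr

theorem unifProb_union_le (E F : Set (Perm (Box n))) :
    unifProb W n (E ∪ F) ≤ unifProb W n E + unifProb W n F := by
  unfold unifProb
  rw [← add_div]
  gcongr
  exact_mod_cast (card_le_card fun π hπ => by
    simp only [mem_filter, mem_union, mem_univ, true_and, Set.mem_union] at hπ ⊢
    tauto).trans (card_union_le _ _)

theorem unifProb_le_one (E : Set (Perm (Box n))) : unifProb W n E ≤ 1 :=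
  div_le_one_of_le₀ (by gcongr; exact And.left) (Nat.cast_nonneg _)

theorem unifProb_lt_maxCycle_le (j : Box n) (m : ℕ) :
    unifProb W n {π | (j : ℤ) + m * W < maxCycle π j} ≤ ((W : ℝ) ^ 2 / (W ^ 2 + 1)) ^ m := by
  have h := card_lt_maxCycle_pow_mul_le (W := W) j m
  unfold unifProb
  refine div_le_of_le_mul₀ (Nat.cast_nonneg _) (by positivity) ?_
  rw [div_pow, div_mul_eq_mul_div, le_div_iff₀ (by positivity)]
  exact_mod_cast (mul_comm _ _).trans_le h

theorem unifProb_minCycle_lt_le (j : Box n) (m : ℕ) :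
    unifProb W n {π | minCycle π j < j - m * W} ≤ ((W : ℝ) ^ 2 / (W ^ 2 + 1)) ^ m := by
  refine le_of_eq_of_le ?_ (unifProb_lt_maxCycle_le (negBox n j) m)
  unfold unifProb
  simp only [Set.mem_ofPred_eq]
  congr 2
  refine card_equiv (MulAut.conj (negBox n)).toEquiv fun π => ?_
  -- unfold the filters first: rewriting their predicates in place breaks the decidability instances
  simp only [mem_filter, mem_univ, true_and]
  simp only [MulEquiv.toEquiv_eq_coe, MulEquiv.coe_toEquiv, conj_negBox_mem_SW_iff,
    maxCycle_conj_negBox, coe_negBox]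
  exact and_congr_right' (by omega)

theorem setOf_le_diamCycle_subset (j : Box n) {m : ℕ} {lam : ℝ} (hm : 2 * m * W < lam) :
    {π | lam ≤ ((diamCycle π j : ℤ) : ℝ)} ⊆
      {π | (j : ℤ) + m * W < maxCycle π j} ∪ {π | minCycle π j < j - m * W} := by
  intro π hπ
  by_contra h
  simp only [Set.mem_union, Set.mem_ofPred_eq, not_or, not_lt] at hπ h
  have hdiam : diamCycle π j ≤ 2 * m * W := by unfold diamCycle; linarith
  have : ((diamCycle π j : ℤ) : ℝ) ≤ 2 * m * W := by exact_mod_cast hdiam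
  linarith

theorem unifProb_le_diamCycle_le (j : Box n) {m : ℕ} {lam : ℝ} (hm : 2 * m * W < lam) :
    unifProb W n {π | lam ≤ ((diamCycle π j : ℤ) : ℝ)} ≤ 2 * ((W : ℝ) ^ 2 / (W ^ 2 + 1)) ^ m :=
  calc _ ≤ unifProb W n ({π | (j : ℤ) + m * W < maxCycle π j} ∪ {π | minCycle π j < j - m * W}) :=
        unifProb_mono (setOf_le_diamCycle_subset j hm)
    _ ≤ _ := unifProb_union_le _ _
    _ ≤ _ := add_le_add (unifProb_lt_maxCycle_le j m) (unifProb_minCycle_lt_le j m)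
    _ = _ := (two_mul _).symm

end Probability

section Exponent

open Real

theorem one_le_two_mul_exp_neg {x : ℝ} (hx : x ≤ 1 / 2) : 1 ≤ 2 * exp (-x) :=
  calc (1 : ℝ) = 2 * exp (-log 2) := by rw [exp_neg, exp_log two_pos]; norm_num
    _ ≤ 2 * exp (-x) := by gcongr; linarith [log_two_gt_d9]

theorem sq_div_sq_add_one_le_exp {W : ℝ} (hW : 1 ≤ W) :
    W ^ 2 / (W ^ 2 + 1) ≤ exp (-(1 / (2 * W ^ 2))) :=
  calc W ^ 2 / (W ^ 2 + 1) = -(1 / (W ^ 2 + 1)) + 1 := by field_simp; ring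
    _ ≤ exp (-(1 / (W ^ 2 + 1))) := add_one_le_exp _
    _ ≤ exp (-(1 / (2 * W ^ 2))) := by gcongr; nlinarith

theorem exists_two_mul_lt_and_pow_le_exp {W lam : ℝ} (hW : 1 ≤ W) (hlam : 4 * W ^ 3 < lam) :
    ∃ m : ℕ, 2 * m * W < lam ∧ (W ^ 2 / (W ^ 2 + 1)) ^ m ≤ exp (-(1 / 8) * lam / W ^ 3) := by
  set u := lam / (2 * W) with hu_def
  have hu : 2 ≤ u := by
    rw [le_div_iff₀ (by positivity)]
    nlinarith [pow_le_pow_left₀ zero_le_one hW 2]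
  set m := ⌈u⌉₊ - 1
  have hm : (m : ℝ) + 1 = ⌈u⌉₊ := by
    rw [← Nat.cast_add_one, Nat.sub_add_cancel (Nat.one_le_ceil_iff.2 (by linarith))]
  have hmu : (m : ℝ) < u := by linarith [Nat.ceil_lt_add_one (by linarith : 0 ≤ u)]
  have hum : u / 2 ≤ m := by linarith [Nat.le_ceil u]
  refine ⟨m, ?_, ?_⟩
  · rw [hu_def, lt_div_iff₀ (by positivity)] at hmu
    linarith
  calc (W ^ 2 / (W ^ 2 + 1)) ^ m ≤ exp (-(1 / (2 * W ^ 2))) ^ m := by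
        gcongr; exact sq_div_sq_add_one_le_exp hW
    _ = exp (-(m / (2 * W ^ 2))) := by rw [← exp_nat_mul]; ring_nf
    _ ≤ exp (-(u / 2 / (2 * W ^ 2))) := by gcongr
    _ = exp (-(1 / 8) * lam / W ^ 3) := by rw [hu_def]; congr 1; field_simp; ring

end Exponent

/-- There is a universal constant `c > 0` such that for all integers
`n, W ≥ 1`, every `j ∈ [-n,n]` and every real `λ ≥ 1`,
`P_{∞,W,n}(diam C_π(j) ≥ λ) ≤ 2 exp(-c λ / W³)`. -/
theorem cycle_diameter_tail_uniform :
    ∃ c : ℝ, 0 < c ∧ ∀ (n W : ℕ), 1 ≤ n → 1 ≤ W →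
      ∀ (j : Box n) (lam : ℝ), 1 ≤ lam →
        unifProb W n {π | lam ≤ ((diamCycle π j : ℤ) : ℝ)} ≤
          2 * Real.exp (-c * lam / (W : ℝ) ^ 3) := by
  refine ⟨1 / 8, by norm_num, fun n W _ hW j lam _ => ?_⟩
  have hW' : (1 : ℝ) ≤ W := by exact_mod_cast hW
  rcases le_or_gt lam (4 * (W : ℝ) ^ 3) with hsmall | hlarge
  · calc _ ≤ 1 := unifProb_le_one _
      _ ≤ 2 * Real.exp (-(1 / 8 * lam / (W : ℝ) ^ 3)) :=
        one_le_two_mul_exp_neg (by rw [div_le_iff₀ (by positivity)]; linarith)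
      _ = _ := by ring_nf
  · obtain ⟨m, hmW, hm⟩ := exists_two_mul_lt_and_pow_le_exp hW' hlarge
    calc _ ≤ 2 * ((W : ℝ) ^ 2 / (W ^ 2 + 1)) ^ m := unifProb_le_diamCycle_le j hmW
      _ ≤ _ := by gcongr
end

section
/- There exists a universal constant C > 0 such that for all integers n, W ≥ 1, every real λ ≥ 0, and every permutation τ of [-n,n], the number of π ∈ S_W with max C_π(0) > λ + 2W and Φ_λ(π) = τ is at most C·W². -/
open Finset

/-!
`Φ_t(π) = τ` forces `π = τ ∘ (a b)` with `a = π^{i_first+1}(0)` and `b = π^{i_last+1}(0)`, so `π`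
is determined by the pair `(a, b)`. Since `π` moves every point by at most `W`, the first point of
the orbit of `0` above `t = λ + 2W` lies in `(t, t + W]` and the point following the last
downcrossing lies in `(t - W, t]`. Hence there are at most `W²` such `π`, and `C = 1` works.
-/

open Equiv

theorem Nat.exists_crossing {p : ℕ → Prop} {a b : ℕ} (hab : a ≤ b) (ha : p a) (hb : ¬p b) :
    ∃ j, a ≤ j ∧ j < b ∧ p j ∧ ¬p (j + 1) := by
  induction b, hab using Nat.le_induction with
  | base => exact absurd ha hb
  | succ b hab ih =>
    by_cases hpb : p b
    · exact ⟨b, hab, b.lt_succ_self, hpb, hb⟩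
    · obtain ⟨j, haj, hjb, hj, hj1⟩ := ih hpb
      exact ⟨j, haj, hjb.trans b.lt_succ_self, hj, hj1⟩

theorem card_le_card_mul_card_of_mul_swap_eq {α : Type*} [DecidableEq α]
    {s : Finset (Perm α)} {τ : Perm α} {f g : Perm α → α} {A B : Finset α}
    (hf : ∀ π ∈ s, f π ∈ A) (hg : ∀ π ∈ s, g π ∈ B)
    (hτ : ∀ π ∈ s, π * swap (f π) (g π) = τ) :
    s.card ≤ A.card * B.card := by
  have recover : ∀ π ∈ s, π = τ * swap (f π) (g π) := fun π hπ => by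
    rw [← hτ π hπ, mul_assoc, swap_mul_self, mul_one]
  rw [← card_product]
  refine card_le_card_of_injOn (fun π => (f π, g π))
    (fun π hπ => mem_product.2 ⟨hf π hπ, hg π hπ⟩) fun π₁ h₁ π₂ h₂ h => ?_
  simp only [Prod.mk.injEq] at h
  rw [recover π₁ h₁, recover π₂ h₂, h.1, h.2]

section Orbit

variable {n : ℕ} (π : Perm (Box n)) (j : Box n)

theorem exists_pow_apply_eq_maxCycle : ∃ m : ℕ, (((π ^ m) j : Box n) : ℤ) = maxCycle π j := by
  have hne : {x : ℤ | ∃ k : ℤ, (((π ^ k) j : Box n) : ℤ) = x}.Nonempty := ⟨j, 0, rfl⟩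
  have hbdd : BddAbove {x : ℤ | ∃ k : ℤ, (((π ^ k) j : Box n) : ℤ) = x} :=
    ⟨n, by rintro _ ⟨k, rfl⟩; exact (mem_Icc.1 ((π ^ k) j).2).2⟩
  obtain ⟨k, hk⟩ := Int.csSup_mem hne hbdd
  obtain ⟨m, hm⟩ := Perm.SameCycle.exists_nat_pow_eq (f := π) ⟨k, rfl⟩
  exact ⟨m, by rw [hm]; exact hk⟩

theorem permPeriod_pos_and_pow_apply_self :
    0 < permPeriod π j ∧ (π ^ permPeriod π j) j = j :=
  Nat.sInf_mem (s := {m : ℕ | 0 < m ∧ (π ^ m) j = j})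
    ⟨orderOf π, orderOf_pos π, by rw [pow_orderOf_eq_one]; rfl⟩

theorem pow_mod_permPeriod_apply (m : ℕ) : (π ^ (m % permPeriod π j)) j = (π ^ m) j :=
  Function.IsPeriodicPt.iterate_mod_apply (permPeriod_pos_and_pow_apply_self π j).2 m

end Orbit

section Crossing

variable {n : ℕ} {t : ℝ} {π : Perm (Box n)}

theorem iFirst_spec (ht : 0 ≤ t) (hmax : t < ((maxCycle π (boxZero n) : ℤ) : ℝ)) :
    ((((π ^ iFirst t π) (boxZero n) : Box n) : ℤ) : ℝ) ≤ t ∧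
      t < ((((π ^ (iFirst t π + 1)) (boxZero n) : Box n) : ℤ) : ℝ) := by
  obtain ⟨m, hm⟩ := exists_pow_apply_eq_maxCycle π (boxZero n)
  obtain ⟨j, -, -, hj, hj1⟩ :=
    Nat.exists_crossing (p := fun j => ((((π ^ j) (boxZero n) : Box n) : ℤ) : ℝ) ≤ t)
      (Nat.zero_le m) (by simpa [boxZero] using ht) (by rw [hm]; exact not_le.2 hmax)
  exact Nat.sInf_mem (s := {j : ℕ | ((((π ^ j) (boxZero n) : Box n) : ℤ) : ℝ) ≤ t ∧
    t < ((((π ^ (j + 1)) (boxZero n) : Box n) : ℤ) : ℝ)}) ⟨j, hj, not_le.1 hj1⟩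

theorem iLast_spec (ht : 0 ≤ t) (hmax : t < ((maxCycle π (boxZero n) : ℤ) : ℝ)) :
    ((((π ^ (iLast t π + 1)) (boxZero n) : Box n) : ℤ) : ℝ) ≤ t ∧
      t < ((((π ^ iLast t π) (boxZero n) : Box n) : ℤ) : ℝ) := by
  obtain ⟨hP, hPz⟩ := permPeriod_pos_and_pow_apply_self π (boxZero n)
  obtain ⟨m, hm⟩ := exists_pow_apply_eq_maxCycle π (boxZero n)
  -- the orbit is above `t` at time `m % Period(π, 0)` and at `0 ≤ t` at time `Period(π, 0)`
  obtain ⟨j, -, hjP, hj, hj1⟩ :=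
    Nat.exists_crossing (p := fun j => t < ((((π ^ j) (boxZero n) : Box n) : ℤ) : ℝ))
      (Nat.mod_lt m hP).le (by rw [pow_mod_permPeriod_apply, hm]; exact hmax)
      (by rw [hPz]; simpa [boxZero] using ht)
  exact (Nat.sSup_mem (s := {j : ℕ | j < permPeriod π (boxZero n) ∧
    ((((π ^ (j + 1)) (boxZero n) : Box n) : ℤ) : ℝ) ≤ t ∧
    t < ((((π ^ j) (boxZero n) : Box n) : ℤ) : ℝ)})
    ⟨j, hjP, not_lt.1 hj1, hj⟩ ⟨_, fun _ h => h.1.le⟩).2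

variable {W : ℕ} (hπ : π ∈ SW n W) (ht : 0 ≤ t)
  (hmax : t < ((maxCycle π (boxZero n) : ℤ) : ℝ))
include hπ ht hmax

theorem pow_iFirst_succ_apply_mem_Ioc :
    (((π ^ (iFirst t π + 1)) (boxZero n) : Box n) : ℤ) ∈ Ioc ⌊t⌋ (⌊t⌋ + W) := by
  obtain ⟨hle, hlt⟩ := iFirst_spec ht hmax
  rw [pow_succ', Perm.mul_apply] at hlt ⊢
  have hdisp := abs_le.1 (hπ ((π ^ iFirst t π) (boxZero n)))
  have hfloor := Int.le_floor.2 hle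
  exact mem_Ioc.2 ⟨Int.floor_lt.2 hlt, by omega⟩

theorem pow_iLast_succ_apply_mem_Ioc :
    (((π ^ (iLast t π + 1)) (boxZero n) : Box n) : ℤ) ∈ Ioc (⌊t⌋ - W) ⌊t⌋ := by
  obtain ⟨hle, hlt⟩ := iLast_spec ht hmax
  rw [pow_succ', Perm.mul_apply] at hle ⊢
  have hdisp := abs_le.1 (hπ ((π ^ iLast t π) (boxZero n)))
  have hfloor := Int.floor_lt.2 hlt
  exact mem_Ioc.2 ⟨by omega, Int.le_floor.2 hle⟩

end Crossing

open scoped Classical in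
/-- There is a universal constant `C > 0` such that for all
`n, W ≥ 1`, every real `λ ≥ 0` and every permutation `τ` of `[-n,n]`, the number of
`π ∈ S_W` with `max C_π(0) > λ + 2W` and `Φ_{λ+2W}(π) = τ` is at most `C W²`. -/
theorem uncrossing_preimage_bound :
    ∃ C : ℝ, 0 < C ∧ ∀ (n W : ℕ), 1 ≤ n → 1 ≤ W → ∀ lam : ℝ, 0 ≤ lam →
      ∀ τ : Equiv.Perm (Box n),
        ((Finset.univ.filter fun π : Equiv.Perm (Box n) =>
          π ∈ SW n W ∧ lam + 2 * W < ((maxCycle π (boxZero n) : ℤ) : ℝ) ∧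
            Phi (lam + 2 * W) π = τ).card : ℝ) ≤ C * W ^ 2 := by
  refine ⟨1, one_pos, fun n W _ _ lam hlam τ => ?_⟩
  set t : ℝ := lam + 2 * W
  have ht : 0 ≤ t := by positivity
  set upper := (Ioc ⌊t⌋ (⌊t⌋ + W)).subtype (· ∈ Icc (-(n : ℤ)) n)
  set lower := (Ioc (⌊t⌋ - W) ⌊t⌋).subtype (· ∈ Icc (-(n : ℤ)) n)
  have hupper : upper.card ≤ W :=
    (card_subtype _ _).trans_le ((card_filter_le _ _).trans_eq (by simp))
  have hlower : lower.card ≤ W :=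
    (card_subtype _ _).trans_le ((card_filter_le _ _).trans_eq (by simp))
  calc _ ≤ ((upper.card * lower.card : ℕ) : ℝ) := by
        refine Nat.cast_le.2 (card_le_card_mul_card_of_mul_swap_eq (τ := τ)
          (f := fun π => (π ^ (iFirst t π + 1)) (boxZero n))
          (g := fun π => (π ^ (iLast t π + 1)) (boxZero n)) ?_ ?_ ?_) <;>
        intro π hπ <;> obtain ⟨hSW, hmax, hΦ⟩ := (mem_filter.1 hπ).2
        · exact mem_subtype.2 (pow_iFirst_succ_apply_mem_Ioc hSW ht hmax)
        · exact mem_subtype.2 (pow_iLast_succ_apply_mem_Ioc hSW ht hmax)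
        · exact hΦ
    _ ≤ ((W * W : ℕ) : ℝ) := by exact_mod_cast Nat.mul_le_mul hupper hlower
    _ = 1 * (W : ℝ) ^ 2 := by push_cast; ring
end

section
/- Let p ≥ 1 be a real number and let u, v, s, t, λ be real numbers with u ≤ λ, v ≤ λ, s > λ, and t > λ. Then |t − u|^p + |s − v|^p ≥ |u − v|^p + |s − t|^p + (min(s,t) − max(u,v))^p. -/
open Finset

private lemma real_add_rpow_le (p a b : ℝ) (ha : 0 ≤ a) (hb : 0 ≤ b) (hp : 1 ≤ p) :
    a ^ p + b ^ p ≤ (a + b) ^ p := by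
  lift a to NNReal using ha
  lift b to NNReal using hb
  have := NNReal.add_rpow_le_rpow_add a b hp
  exact_mod_cast this

private lemma uncross_key (p u v s t lam : ℝ) (hp : 1 ≤ p) (huv : u ≤ v)
    (hv : v ≤ lam) (hs : lam < s) (ht : lam < t) :
    |u - v| ^ p + |s - t| ^ p + (min s t - max u v) ^ p ≤
      |t - u| ^ p + |s - v| ^ p := by
  have h1 : |u - v| = v - u := by
    rw [abs_sub_comm]; exact abs_of_nonneg (by linarith)
  have h2 : |t - u| = t - u := abs_of_nonneg (by linarith)
  have h3 : |s - v| = s - v := abs_of_nonneg (by linarith)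
  rw [h1, h2, h3, max_eq_right huv]
  rcases le_total s t with hst | hst
  · rw [min_eq_left hst, abs_of_nonpos (by linarith : s - t ≤ 0), neg_sub]
    have key1 : (v - u) ^ p + (t - s) ^ p ≤ ((v - u) + (t - s)) ^ p :=
      real_add_rpow_le p _ _ (by linarith) (by linarith) hp
    have key2 : ((v - u) + (t - s)) ^ p ≤ (t - u) ^ p :=
      Real.rpow_le_rpow (by linarith) (by linarith) (by linarith)
    linarith
  · rw [min_eq_right hst, abs_of_nonneg (by linarith : 0 ≤ s - t)]
    have key1 : (v - u) ^ p + (t - v) ^ p ≤ ((v - u) + (t - v)) ^ p :=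
      real_add_rpow_le p _ _ (by linarith) (by linarith) hp
    have e : (v - u) + (t - v) = t - u := by ring
    rw [e] at key1
    have key2 : (s - t) ^ p ≤ (s - v) ^ p :=
      Real.rpow_le_rpow (by linarith) (by linarith) (by linarith)
    linarith

/-- For `p ≥ 1` and reals `u, v ≤ λ < s, t`,
`|t-u|^p + |s-v|^p ≥ |u-v|^p + |s-t|^p + (min(s,t) - max(u,v))^p`. -/
theorem uncrossing_energy_inequality (p u v s t lam : ℝ) (hp : 1 ≤ p)
    (hu : u ≤ lam) (hv : v ≤ lam) (hs : lam < s) (ht : lam < t) :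
    |u - v| ^ p + |s - t| ^ p + (min s t - max u v) ^ p ≤
      |t - u| ^ p + |s - v| ^ p := by
  rcases le_total u v with huv | huv
  · exact uncross_key p u v s t lam hp huv hv hs ht
  · have := uncross_key p v u t s lam hp huv hu ht hs
    rw [abs_sub_comm v u, abs_sub_comm t s, min_comm t s, max_comm v u] at this
    linarith
end

section
/- There exists a universal constant C > 0 such that for every real p ≥ 1, every integer W ≥ 1, and all integers a ≤ λ, the sum over integers b > λ of exp(−(b − a)^p / W^p) is at most C·W·exp(−(λ − a)^p / W^p). -/
/-!
With `x = (λ - a) / W` and `y = (n + 1) / W` for `b = λ + 1 + n`, superadditivity of `t ↦ t ^ p`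
gives `(x + y) ^ p ≥ x ^ p + y ^ p ≥ x ^ p + y - 1`, so the `b`-th term is at most
`e · exp (-x ^ p) · exp (-(n + 1) / W)`. The geometric series left over sums to
`1 / (exp (1 / W) - 1) ≤ W`, hence `C = e` works.
-/

open Real

lemma self_le_rpow_add_one {s p : ℝ} (hs : 0 ≤ s) (hp : 1 ≤ p) : s ≤ s ^ p + 1 := by
  rcases le_or_gt s 1 with hs1 | hs1
  · linarith [rpow_nonneg hs p]
  · have : s ^ (1 : ℝ) ≤ s ^ p := rpow_le_rpow_of_exponent_le hs1.le hp
    rw [rpow_one] at this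
    linarith

lemma exp_neg_rpow_add_div_le {x y p W : ℝ} (hx : 0 ≤ x) (hy : 0 ≤ y) (hp : 1 ≤ p) (hW : 0 < W) :
    exp (-(x + y) ^ p / W ^ p) ≤ exp 1 * exp (-x ^ p / W ^ p) * exp (-(y / W)) := by
  have hxW : 0 ≤ x / W := by positivity
  have hyW : 0 ≤ y / W := by positivity
  have key : (x / W) ^ p + y / W ≤ (x / W + y / W) ^ p + 1 :=
    calc (x / W) ^ p + y / W ≤ (x / W) ^ p + (y / W) ^ p + 1 := by
          linarith [self_le_rpow_add_one hyW hp]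
      _ ≤ (x / W + y / W) ^ p + 1 := by gcongr; exact add_rpow_le_rpow_add hxW hyW hp
  rw [← add_div, div_rpow hx hW.le, div_rpow (by positivity) hW.le] at key
  rw [← exp_add, ← exp_add, exp_le_exp, neg_div, neg_div]
  linarith

lemma hasSum_exp_neg_mul_succ {t : ℝ} (ht : 0 < t) :
    HasSum (fun n : ℕ ↦ exp (-(t * (n + 1)))) (exp t - 1)⁻¹ := by
  have hr : exp (-t) < 1 := exp_lt_one_iff.2 (neg_neg_of_pos ht)
  have hterm : (fun n : ℕ ↦ exp (-t) * exp (-t) ^ n) = fun n : ℕ ↦ exp (-(t * (n + 1))) := by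
    ext n
    rw [← exp_nat_mul, ← exp_add]
    ring_nf
  have hsum : exp (-t) * (1 - exp (-t))⁻¹ = (exp t - 1)⁻¹ := by
    have : 1 < exp t := one_lt_exp_iff.2 ht
    rw [exp_neg]
    field_simp
  simpa only [hterm, hsum] using (hasSum_geometric_of_lt_one (exp_pos _).le hr).mul_left (exp (-t))

lemma inv_exp_sub_one_le_inv {t : ℝ} (ht : 0 < t) : (exp t - 1)⁻¹ ≤ t⁻¹ := by
  gcongr
  linarith [add_one_le_exp t]

def natEquivIntGT (lam : ℤ) : ℕ ≃ {b : ℤ // lam < b} where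
  toFun n := ⟨lam + 1 + n, by omega⟩
  invFun b := (b.1 - lam - 1).toNat
  left_inv n := by simp only; omega
  right_inv b := Subtype.ext (by have := b.2; simp only; omega)

/-- There is a universal constant `C > 0` such that for every real
`p ≥ 1`, every integer `W ≥ 1` and all integers `a ≤ λ`,
`Σ_{b > λ} exp(-(b-a)^p / W^p) ≤ C W exp(-(λ-a)^p / W^p)`. -/
theorem geometric_tail_sum :
    ∃ C : ℝ, 0 < C ∧ ∀ (p : ℝ), 1 ≤ p → ∀ (W : ℕ), 1 ≤ W →
      ∀ a lam : ℤ, a ≤ lam →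
        ∑' b : {b : ℤ // lam < b},
            Real.exp (-(((b : ℤ) - a : ℤ) : ℝ) ^ p / (W : ℝ) ^ p) ≤
          C * W * Real.exp (-((lam - a : ℤ) : ℝ) ^ p / (W : ℝ) ^ p) := by
  refine ⟨exp 1, exp_pos 1, fun p hp W hW a lam hal => ?_⟩
  have hW₀ : (0 : ℝ) < (W : ℝ)⁻¹ := inv_pos.2 (by exact_mod_cast hW)
  set E := exp (-((lam - a : ℤ) : ℝ) ^ p / (W : ℝ) ^ p)
  have hgeom := hasSum_exp_neg_mul_succ hW₀
  have hterm (n : ℕ) : exp (-(((natEquivIntGT lam n : ℤ) - a : ℤ) : ℝ) ^ p / (W : ℝ) ^ p) ≤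
      exp 1 * E * exp (-((W : ℝ)⁻¹ * (n + 1))) := by
    have hcast : (((natEquivIntGT lam n : ℤ) - a : ℤ) : ℝ) = ((lam - a : ℤ) : ℝ) + (n + 1) := by
      simp only [natEquivIntGT, Equiv.coe_fn_mk]
      push_cast
      ring
    rw [hcast, inv_mul_eq_div]
    exact exp_neg_rpow_add_div_le (by exact_mod_cast sub_nonneg.2 hal) (by positivity) hp
      (inv_pos.1 hW₀)
  have hsum := hgeom.summable.mul_left (exp 1 * E)
  calc _ = ∑' n : ℕ, exp (-(((natEquivIntGT lam n : ℤ) - a : ℤ) : ℝ) ^ p / (W : ℝ) ^ p) :=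
        ((natEquivIntGT lam).tsum_eq _).symm
    _ ≤ ∑' n : ℕ, exp 1 * E * exp (-((W : ℝ)⁻¹ * (n + 1))) :=
        Summable.tsum_le_tsum hterm (hsum.of_nonneg_of_le (fun _ ↦ (exp_pos _).le) hterm) hsum
    _ = exp 1 * E * (exp (W : ℝ)⁻¹ - 1)⁻¹ := by rw [tsum_mul_left, hgeom.tsum_eq]
    _ ≤ exp 1 * E * (W : ℝ)⁻¹⁻¹ :=
        mul_le_mul_of_nonneg_left (inv_exp_sub_one_le_inv hW₀) (by positivity)
    _ = exp 1 * W * E := by rw [inv_inv]; ring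
end

section
/- There exists a universal constant C > 0 such that for every real p ≥ 1, every integer W ≥ 1, and all integers m ≤ λ, the double sum over integers a ≤ m and integers b > λ of exp(−(b − a)^p / W^p) is at most C·W²·exp(−(λ − m)^p / W^p). -/
/-!
Write `b - a = d + s` with `d = λ - m ≥ 0` and `s = (m - a) + (b - λ) ≥ 1`. Superadditivity of
`t ↦ t ^ p` for `p ≥ 1` and the bound `u ^ p ≥ u - 1` give
`(d + s) ^ p / W ^ p ≥ d ^ p / W ^ p + s / W - 1`, so each term is at most
`e · exp(-d ^ p / W ^ p) · exp(-(m - a) / W) · exp(-(b - λ - 1) / W)`. The double sum thus splits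
into a product of two geometric series of ratio `exp(-1 / W)`, each bounded by `W + 1 ≤ 2W`.
-/

open Real

lemma sub_one_le_rpow {u p : ℝ} (hu : 0 ≤ u) (hp : 1 ≤ p) : u - 1 ≤ u ^ p := by
  rcases le_or_gt u 1 with h | h
  · linarith [rpow_nonneg hu p]
  · linarith [self_le_rpow_of_one_le h.le hp]

lemma exp_neg_add_rpow_div_le {d s p W : ℝ} (hd : 0 ≤ d) (hs : 0 ≤ s) (hp : 1 ≤ p) (hW : 0 < W) :
    exp (-(d + s) ^ p / W ^ p) ≤ exp 1 * exp (-d ^ p / W ^ p) * exp (-s / W) := by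
  have hWp : 0 < W ^ p := rpow_pos_of_pos hW p
  have hsuper : d ^ p / W ^ p + s ^ p / W ^ p ≤ (d + s) ^ p / W ^ p := by
    rw [← add_div]
    exact div_le_div_of_nonneg_right (add_rpow_le_rpow_add hd hs hp) hWp.le
  have hlin : s / W - 1 ≤ s ^ p / W ^ p := by
    rw [← div_rpow hs hW.le]
    exact sub_one_le_rpow (div_nonneg hs hW.le) hp
  rw [← exp_add, ← exp_add, exp_le_exp]
  simp only [neg_div]
  linarith

lemma inv_one_sub_exp_neg_le {x : ℝ} (hx : 0 < x) : (1 - exp (-x))⁻¹ ≤ 1 + x⁻¹ := by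
  have hexp : exp (-x) ≤ (1 + x)⁻¹ := by
    rw [exp_neg]
    exact inv_anti₀ (by positivity) (by linarith [add_one_le_exp x])
  have hgap : x / (1 + x) ≤ 1 - exp (-x) := by
    have : x / (1 + x) = 1 - (1 + x)⁻¹ := by field_simp; ring
    linarith
  calc (1 - exp (-x))⁻¹ ≤ (x / (1 + x))⁻¹ := inv_anti₀ (by positivity) hgap
    _ = 1 + x⁻¹ := by field_simp; ring

lemma hasSum_exp_neg_nat_div {W : ℝ} (hW : 0 < W) :
    HasSum (fun n : ℕ => exp (-n / W)) (1 - exp (-(1 / W)))⁻¹ := by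
  have hr : exp (-(1 / W)) < 1 := exp_lt_one_iff.mpr (by simp [hW])
  convert hasSum_geometric_of_lt_one (exp_nonneg _) hr using 2 with n
  rw [← exp_nat_mul]
  ring_nf

lemma tsum_exp_neg_nat_div_le {W : ℝ} (hW : 0 < W) : ∑' n : ℕ, exp (-n / W) ≤ W + 1 := by
  rw [(hasSum_exp_neg_nat_div hW).tsum_eq]
  simpa [add_comm] using inv_one_sub_exp_neg_le (one_div_pos.mpr hW)

lemma summable_exp_neg_nat_div_mul {W : ℝ} (hW : 0 < W) :
    Summable fun ij : ℕ × ℕ => exp (-ij.1 / W) * exp (-ij.2 / W) :=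
  have hg := (hasSum_exp_neg_nat_div hW).summable.norm
  summable_mul_of_summable_norm hg hg

lemma tsum_exp_neg_nat_div_mul_le {W : ℝ} (hW : 0 < W) :
    ∑' ij : ℕ × ℕ, exp (-ij.1 / W) * exp (-ij.2 / W) ≤ (W + 1) ^ 2 := by
  have hg := (hasSum_exp_neg_nat_div hW).summable.norm
  rw [← tsum_mul_tsum_of_summable_norm hg hg, sq]
  have := tsum_exp_neg_nat_div_le hW
  gcongr

lemma exp_neg_rpow_div_le_mul_exp_nat {d p W : ℝ} (hd : 0 ≤ d) (hp : 1 ≤ p) (hW : 0 < W)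
    (i j : ℕ) :
    exp (-(d + (i + j + 1)) ^ p / W ^ p) ≤
      exp 1 * exp (-d ^ p / W ^ p) * (exp (-i / W) * exp (-j / W)) := by
  have hgeom : exp (-(i + j + 1 : ℝ) / W) ≤ exp (-i / W) * exp (-j / W) := by
    rw [← exp_add, exp_le_exp, ← add_div]
    exact div_le_div_of_nonneg_right (by linarith) hW.le
  exact (exp_neg_add_rpow_div_le hd (by positivity) hp hW).trans
    (mul_le_mul_of_nonneg_left hgeom (by positivity))

def natEquivIntLe (m : ℤ) : ℕ ≃ {a : ℤ // a ≤ m} where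
  toFun n := ⟨m - n, by omega⟩
  invFun a := (m - a).toNat
  left_inv n := by simp
  right_inv a := Subtype.ext (by have := a.2; simp only; omega)

def natEquivIntGt (lam : ℤ) : ℕ ≃ {b : ℤ // lam < b} where
  toFun n := ⟨lam + 1 + n, by omega⟩
  invFun b := (b - lam - 1).toNat
  left_inv n := by simp only; omega
  right_inv b := Subtype.ext (by have := b.2; simp only; omega)

/-- There is a universal constant `C > 0` such that for every real
`p ≥ 1`, every integer `W ≥ 1` and all integers `m ≤ λ`,
`Σ_{a ≤ m} Σ_{b > λ} exp(-(b-a)^p / W^p) ≤ C W² exp(-(λ-m)^p / W^p)`. -/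
theorem geometric_tail_double_sum :
    ∃ C : ℝ, 0 < C ∧ ∀ (p : ℝ), 1 ≤ p → ∀ (W : ℕ), 1 ≤ W →
      ∀ m lam : ℤ, m ≤ lam →
        ∑' x : {a : ℤ // a ≤ m} × {b : ℤ // lam < b},
            Real.exp (-(((x.2 : ℤ) - (x.1 : ℤ) : ℤ) : ℝ) ^ p / (W : ℝ) ^ p) ≤
          C * W ^ 2 * Real.exp (-((lam - m : ℤ) : ℝ) ^ p / (W : ℝ) ^ p) := by
  refine ⟨4 * exp 1, by positivity, fun p hp W hW m lam hm => ?_⟩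
  have hW0 : (0 : ℝ) < W := by exact_mod_cast hW
  have hd : (0 : ℝ) ≤ ((lam - m : ℤ) : ℝ) := by exact_mod_cast sub_nonneg.mpr hm
  set E := exp (-((lam - m : ℤ) : ℝ) ^ p / (W : ℝ) ^ p)
  set h : ℕ × ℕ → ℝ := fun ij => exp (-ij.1 / W) * exp (-ij.2 / W)
  have hh : Summable h := summable_exp_neg_nat_div_mul hW0
  rw [← ((natEquivIntLe m).prodCongr (natEquivIntGt lam)).tsum_eq]
  have hterm : ∀ ij : ℕ × ℕ, exp (-(((lam + 1 + ij.2 : ℤ) - (m - ij.1) : ℤ) : ℝ) ^ p / (W : ℝ) ^ p)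
      ≤ exp 1 * E * h ij := fun ⟨i, j⟩ => by
    have hsplit : (((lam + 1 + j : ℤ) - (m - i) : ℤ) : ℝ) = ((lam - m : ℤ) : ℝ) + (i + j + 1) := by
      push_cast; ring
    rw [hsplit]
    exact exp_neg_rpow_div_le_mul_exp_nat hd hp hW0 i j
  have hW2 : ((W : ℝ) + 1) ^ 2 ≤ (2 * W) ^ 2 := by
    gcongr
    linarith [(Nat.one_le_cast.mpr hW : (1 : ℝ) ≤ W)]
  calc _ ≤ ∑' ij, exp 1 * E * h ij :=
        Summable.tsum_le_tsum hterm
          ((hh.mul_left _).of_nonneg_of_le (fun _ => (exp_pos _).le) hterm) (hh.mul_left _)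
    _ ≤ exp 1 * E * (2 * W) ^ 2 := by
        rw [tsum_mul_left]
        gcongr
        exact (tsum_exp_neg_nat_div_mul_le hW0).trans hW2
    _ = 4 * exp 1 * W ^ 2 * E := by ring
end
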